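/- Let ρ > 0 and a, b ∈ ℝ with b ∈ [1/2, 3/2], and let σ₀, τ₀ ∈ ℂ with σ₀ ≠ 0, τ₀ ≠ 0 and Re(σ₀τ₀) ≠ −|σ₀||τ₀|. Define G(ρ) = a(1−ρ²)/(2ρ√(ρ+b(1+ρ²))) and F±(ρ) = (G(ρ) ± √(G(ρ)² + σ₀τ₀/ρ))/τ₀ with the principal complex square root. If |F₊(ρ)| = 1 or |F₋(ρ)| = 1, then a²(1−ρ²)²/(bρ² + ρ + b) = (|τ₀|²ρ² − |σ₀|²)² / (|τ₀|²ρ² + 2Re(σ₀τ₀)ρ + |σ₀|²). -/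

import Mathlib

open Complex

/-- `G(ρ) = a(1−ρ²)/(2ρ√(ρ+b(1+ρ²)))`, viewed as a complex number. -/
noncomputable def Gfun (a b ρ : ℝ) : ℂ :=
  ((a * (1 - ρ ^ 2) / (2 * ρ * Real.sqrt (ρ + b * (1 + ρ ^ 2))) : ℝ) : ℂ)

/-- `F₊(ρ) = (G(ρ) + √(G(ρ)² + σ₀τ₀/ρ))/τ₀` with the principal complex square root. -/
noncomputable def Fplus (σ₀ τ₀ : ℂ) (a b ρ : ℝ) : ℂ :=
  (Gfun a b ρ + (Gfun a b ρ ^ 2 + σ₀ * τ₀ / (ρ : ℂ)) ^ ((1 : ℂ) / 2)) / τ₀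

/-- `F₋(ρ) = (G(ρ) − √(G(ρ)² + σ₀τ₀/ρ))/τ₀` with the principal complex square root. -/
noncomputable def Fminus (σ₀ τ₀ : ℂ) (a b ρ : ℝ) : ℂ :=
  (Gfun a b ρ - (Gfun a b ρ ^ 2 + σ₀ * τ₀ / (ρ : ℂ)) ^ ((1 : ℂ) / 2)) / τ₀

/-- Auxiliary: positivity of the denominator `t²ρ² + 2Sρ + s²`. -/
lemma aux_Dpos (ρ S T s t : ℝ) (hρ : 0 < ρ) (ht : 0 < t) (hs : 0 < s)
    (hre : S ≠ -(s * t)) (hc : S ^ 2 + T ^ 2 = s ^ 2 * t ^ 2) :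
    0 < t ^ 2 * ρ ^ 2 + 2 * S * ρ + s ^ 2 := by
  have hDle : -(s * t) ≤ S := by nlinarith [sq_nonneg T, mul_pos hs ht]
  have hDlt : -(s * t) < S := lt_of_le_of_ne hDle (fun hcon => hre hcon.symm)
  nlinarith [sq_nonneg (ρ * t - s), mul_pos hρ (show (0:ℝ) < S + s * t by linarith)]

set_option maxHeartbeats 1600000 in
/-- Auxiliary: the real-algebra core of the rationalized equation. -/
lemma aux_real_key (ρ g u v S T s t e : ℝ) (hρ : 0 < ρ) (ht : 0 < t) (hs : 0 < s)
    (hre : S ≠ -(s * t)) (hc : S ^ 2 + T ^ 2 = s ^ 2 * t ^ 2)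
    (h1 : ρ * u ^ 2 - ρ * v ^ 2 = ρ * g ^ 2 + S) (h2 : 2 * u * v * ρ = T)
    (he : e ^ 2 = 1) (h3 : (g + e * u) ^ 2 + v ^ 2 = t ^ 2) :
    4 * ρ ^ 2 * g ^ 2 * (t ^ 2 * ρ ^ 2 + 2 * S * ρ + s ^ 2) =
      (t ^ 2 * ρ ^ 2 - s ^ 2) ^ 2 := by
  set A : ℝ := (ρ * t ^ 2 + S) ^ 2 + T ^ 2 with hAdef
  by_cases hA0 : A = 0
  · -- degenerate case: contradiction with hre
    exfalso
    have hT0 : T = 0 := by nlinarith [sq_nonneg (ρ * t ^ 2 + S), sq_nonneg T]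
    have hS0 : S = -(ρ * t ^ 2) := by nlinarith [sq_nonneg (ρ * t ^ 2 + S), sq_nonneg T]
    have hSsq : S ^ 2 = ρ ^ 2 * t ^ 4 := by rw [hS0]; ring
    have hsq2 : (ρ * t) ^ 2 = s ^ 2 := by nlinarith [mul_pos ht ht, hSsq]
    have hst : ρ * t = s := by
      nlinarith [hsq2, mul_pos hρ ht, sq_nonneg (ρ * t - s), sq_nonneg (ρ * t + s)]
    exact hre (by rw [hS0, ← hst]; ring)
  · have hApos : 0 < A := lt_of_le_of_ne (by positivity) (Ne.symm hA0)
    have hAq : 2 * ρ * u ^ 2 + 2 * e * ρ * g * u = ρ * t ^ 2 + S := by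
      linear_combination h1 + ρ * h3 - ρ * u ^ 2 * he
    have h4 : 4 * ρ ^ 2 * t ^ 2 * u ^ 2 = A := by
      rw [hAdef]
      linear_combination (-4 * ρ ^ 2 * u ^ 2) * h3 +
        (2 * ρ * u ^ 2 + 2 * e * ρ * g * u + ρ * t ^ 2 + S) * hAq +
        (2 * u * v * ρ + T) * h2 + (-4 * ρ ^ 2 * u ^ 2 * (g ^ 2 - u ^ 2)) * he
    have h5 : 4 * ρ ^ 2 * g ^ 2 * u ^ 2 = 4 * ρ ^ 2 * u ^ 4 - T ^ 2 - 4 * ρ * S * u ^ 2 := by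
      linear_combination (-4 * ρ * u ^ 2) * h1 + (-(2 * u * v * ρ + T)) * h2
    have h6 : 4 * ρ ^ 2 * g ^ 2 * A * t ^ 2 =
        A ^ 2 - 4 * ρ ^ 2 * t ^ 4 * T ^ 2 - 4 * ρ * S * t ^ 2 * A := by
      linear_combination (4 * ρ ^ 2 * t ^ 4) * h5 +
        (4 * ρ ^ 2 * t ^ 2 * u ^ 2 + A - 4 * ρ ^ 2 * g ^ 2 * t ^ 2 - 4 * ρ * S * t ^ 2) * h4
    have keyg : 4 * ρ ^ 2 * g ^ 2 * (t ^ 2 * ρ ^ 2 + 2 * S * ρ + s ^ 2) * (A * t ^ 2) =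
        (t ^ 2 * ρ ^ 2 - s ^ 2) ^ 2 * (A * t ^ 2) := by
      linear_combination (ρ ^ 2 * t ^ 2 + 2 * ρ * S + s ^ 2) * h6 +
        (A * s ^ 2 + A * (2 * ρ * S - 3 * ρ ^ 2 * t ^ 2) + 4 * ρ ^ 2 * t ^ 2 * T ^ 2) * hc
    exact mul_right_cancel₀ (by positivity) keyg

/-- Rationalized fixed-point equation: if `|F₊(ρ)| = 1` or `|F₋(ρ)| = 1`, then
`a²(1−ρ²)²/(bρ² + ρ + b) = (|τ₀|²ρ² − |σ₀|²)²/(|τ₀|²ρ² + 2Re(σ₀τ₀)ρ + |σ₀|²)`. -/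
theorem rationalized_equation (ρ a b : ℝ) (hρ : 0 < ρ)
    (hb : b ∈ Set.Icc (1 / 2 : ℝ) (3 / 2)) (σ₀ τ₀ : ℂ)
    (hσ : σ₀ ≠ 0) (hτ : τ₀ ≠ 0)
    (hre : (σ₀ * τ₀).re ≠ -(‖σ₀‖ * ‖τ₀‖))
    (hF : ‖Fplus σ₀ τ₀ a b ρ‖ = 1 ∨ ‖Fminus σ₀ τ₀ a b ρ‖ = 1) :
    a ^ 2 * (1 - ρ ^ 2) ^ 2 / (b * ρ ^ 2 + ρ + b) =
      ((‖τ₀‖) ^ 2 * ρ ^ 2 - (‖σ₀‖) ^ 2) ^ 2 /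
        ((‖τ₀‖) ^ 2 * ρ ^ 2 + 2 * (σ₀ * τ₀).re * ρ + (‖σ₀‖) ^ 2) := by
  obtain ⟨hb1, hb2⟩ := hb
  have hρ' : (ρ : ℝ) ≠ 0 := hρ.ne'
  set t : ℝ := ‖τ₀‖ with htdef
  set s : ℝ := ‖σ₀‖ with hsdef
  set S : ℝ := (σ₀ * τ₀).re with hSdef
  set T : ℝ := (σ₀ * τ₀).im with hTdef
  have ht : 0 < t := norm_pos_iff.mpr hτ
  have hs : 0 < s := norm_pos_iff.mpr hσ
  -- the constraint |σ₀τ₀|² = s²t²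
  have hc : S ^ 2 + T ^ 2 = s ^ 2 * t ^ 2 := by
    have h1 : Complex.normSq (σ₀ * τ₀) = (‖σ₀ * τ₀‖) ^ 2 :=
      (Complex.sq_norm _).symm
    rw [Complex.normSq_apply, norm_mul] at h1
    rw [hSdef, hTdef, hsdef, htdef]
    linear_combination h1
  -- positivity of the quadratic Q
  have hQpos : 0 < b * ρ ^ 2 + ρ + b := by nlinarith
  have hQnn : 0 ≤ ρ + b * (1 + ρ ^ 2) := by nlinarith
  set g : ℝ := a * (1 - ρ ^ 2) / (2 * ρ * Real.sqrt (ρ + b * (1 + ρ ^ 2))) with hgdef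
  have hsq : Real.sqrt (ρ + b * (1 + ρ ^ 2)) ^ 2 = b * ρ ^ 2 + ρ + b := by
    rw [Real.sq_sqrt hQnn]; ring
  have hsqpos : 0 < Real.sqrt (ρ + b * (1 + ρ ^ 2)) :=
    Real.sqrt_pos.mpr (by nlinarith)
  have hLHS : 4 * ρ ^ 2 * g ^ 2 * (b * ρ ^ 2 + ρ + b) = a ^ 2 * (1 - ρ ^ 2) ^ 2 := by
    rw [hgdef, div_pow]
    rw [mul_pow, mul_pow, hsq]
    field_simp
    ring
  -- complex setup
  set z : ℂ := (g : ℂ) ^ 2 + σ₀ * τ₀ / (ρ : ℂ) with hzdef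
  set w : ℂ := z ^ ((1 : ℂ) / 2) with hwdef
  set u : ℝ := w.re with hudef
  set v : ℝ := w.im with hvdef
  have hw2 : w ^ 2 = z := by
    by_cases hz : z = 0
    · rw [hwdef, hz, Complex.zero_cpow (by norm_num : (1 : ℂ) / 2 ≠ 0)]
      ring
    · rw [hwdef, sq, ← Complex.cpow_add _ _ hz]
      norm_num
  have hzre : z.re = g ^ 2 + S / ρ := by
    rw [hzdef, hSdef]
    simp [Complex.add_re, Complex.div_ofReal_re, ← Complex.ofReal_pow, Complex.mul_re]
  have hzim : z.im = T / ρ := by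
    rw [hzdef, hTdef]
    simp [Complex.add_im, Complex.div_ofReal_im, ← Complex.ofReal_pow, Complex.mul_im]
  have h1 : ρ * u ^ 2 - ρ * v ^ 2 = ρ * g ^ 2 + S := by
    have hre2 := congrArg Complex.re hw2
    rw [sq, Complex.mul_re, hzre, ← sub_eq_iff_eq_add', eq_div_iff hρ'] at hre2
    rw [hudef, hvdef]
    linear_combination hre2
  have h2 : 2 * u * v * ρ = T := by
    have him2 := congrArg Complex.im hw2
    rw [sq, Complex.mul_im, hzim, eq_div_iff hρ'] at him2
    rw [hudef, hvdef]
    linear_combination him2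
  -- extract the modulus condition
  obtain ⟨e, he, h3⟩ : ∃ e : ℝ, e ^ 2 = 1 ∧ (g + e * u) ^ 2 + v ^ 2 = t ^ 2 := by
    rcases hF with h | h
    · refine ⟨1, by norm_num, ?_⟩
      have heq : Fplus σ₀ τ₀ a b ρ = ((g : ℂ) + w) / τ₀ := by
        simp only [hwdef, hzdef, hgdef, Fplus, Gfun]
      rw [heq, norm_div, div_eq_one_iff_eq (norm_ne_zero_iff.mpr hτ)] at h
      have hn : Complex.normSq ((g : ℂ) + w) = t ^ 2 := by
        rw [← Complex.sq_norm, h, htdef]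
      rw [Complex.normSq_apply, Complex.add_re, Complex.add_im, Complex.ofReal_re,
        Complex.ofReal_im] at hn
      rw [hudef, hvdef]
      linear_combination hn
    · refine ⟨-1, by norm_num, ?_⟩
      have heq : Fminus σ₀ τ₀ a b ρ = ((g : ℂ) - w) / τ₀ := by
        simp only [hwdef, hzdef, hgdef, Fminus, Gfun]
      rw [heq, norm_div, div_eq_one_iff_eq (norm_ne_zero_iff.mpr hτ)] at h
      have hn : Complex.normSq ((g : ℂ) - w) = t ^ 2 := by
        rw [← Complex.sq_norm, h, htdef]
      rw [Complex.normSq_apply, Complex.sub_re, Complex.sub_im, Complex.ofReal_re,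
        Complex.ofReal_im] at hn
      rw [hudef, hvdef]
      linear_combination hn
  -- apply the real-algebra lemmas
  have hD : 0 < t ^ 2 * ρ ^ 2 + 2 * S * ρ + s ^ 2 := aux_Dpos ρ S T s t hρ ht hs hre hc
  have hkey : 4 * ρ ^ 2 * g ^ 2 * (t ^ 2 * ρ ^ 2 + 2 * S * ρ + s ^ 2) =
      (t ^ 2 * ρ ^ 2 - s ^ 2) ^ 2 :=
    aux_real_key ρ g u v S T s t e hρ ht hs hre hc h1 h2 he h3
  rw [div_eq_div_iff hQpos.ne' hD.ne']
  linear_combination (-(t ^ 2 * ρ ^ 2 + 2 * S * ρ + s ^ 2)) * hLHS +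
    (b * ρ ^ 2 + ρ + b) * hkey
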